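/- Let (G, B₁, B₂) be a Rota-Baxter system of groups with descendent operation ∘ and cocycle Φ(a) = B₁(a)B₂(a). If Φ is bijective, then the map B: G → G defined by B(a) = B₂(Φ^{-1}(a))^{-1} is a Rota-Baxter operator of weight 1 on G, i.e., B(a)B(b) = B(aB(a)bB(a)^{-1}) for all a,b ∈ G. -/

import Mathlib

/-!
Write `a = Φ x`, `b = Φ y`, so that `B a = (B₂ x)⁻¹`. The system axioms say that `B₁` and `B₂`
turn the descendent operation `x ∘ y = B₁ x * y * B₂ x` into the product and the opposite product,
hence `Φ (x ∘ y) = Φ x * (B₂ x)⁻¹ * Φ y * B₂ x = a * B a * b * (B a)⁻¹`, and applying `B` gives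
`(B₂ (x ∘ y))⁻¹ = (B₂ y * B₂ x)⁻¹ = B a * B b`.
-/

namespace RotaBaxterSystem

variable {G : Type*} [Group G] {B₁ B₂ : G → G}

def descendent (B₁ B₂ : G → G) (a b : G) : G := B₁ a * b * B₂ a

theorem fst_descendent (h1 : ∀ a b : G, B₁ a * B₁ b = B₁ (B₁ a * b * B₂ a)) (a b : G) :
    B₁ (descendent B₁ B₂ a b) = B₁ a * B₁ b :=
  (h1 a b).symm

theorem snd_descendent (h2 : ∀ a b : G, B₂ b * B₂ a = B₂ (B₁ a * b * B₂ a)) (a b : G) :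
    B₂ (descendent B₁ B₂ a b) = B₂ b * B₂ a :=
  (h2 a b).symm

theorem cocycle_descendent (h1 : ∀ a b : G, B₁ a * B₁ b = B₁ (B₁ a * b * B₂ a))
    (h2 : ∀ a b : G, B₂ b * B₂ a = B₂ (B₁ a * b * B₂ a)) (a b : G) :
    B₁ (descendent B₁ B₂ a b) * B₂ (descendent B₁ B₂ a b)
      = B₁ a * B₂ a * (B₂ a)⁻¹ * (B₁ b * B₂ b) * B₂ a := by
  rw [fst_descendent h1, snd_descendent h2]
  group

end RotaBaxterSystem

theorem stmt_12 {G : Type*} [Group G] (B₁ B₂ : G → G)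
    (h1 : ∀ a b : G, B₁ a * B₁ b = B₁ (B₁ a * b * B₂ a))
    (h2 : ∀ a b : G, B₂ b * B₂ a = B₂ (B₁ a * b * B₂ a))
    (Φ : G → G) (hΦ : ∀ a, Φ a = B₁ a * B₂ a)
    (Φinv : G → G) (hli : Function.LeftInverse Φinv Φ) (hri : Function.RightInverse Φinv Φ)
    (B : G → G) (hB : ∀ a, B a = (B₂ (Φinv a))⁻¹) :
    ∀ a b : G, B a * B b = B (a * B a * b * (B a)⁻¹) := by
  have hBΦ : ∀ x, B (Φ x) = (B₂ x)⁻¹ := fun x => by rw [hB, hli x]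
  intro a b
  obtain ⟨x, rfl⟩ := hri.surjective a
  obtain ⟨y, rfl⟩ := hri.surjective b
  have hconj :
      Φ x * B (Φ x) * Φ y * (B (Φ x))⁻¹ = Φ (RotaBaxterSystem.descendent B₁ B₂ x y) := by
    rw [hBΦ, inv_inv, hΦ, hΦ, hΦ, RotaBaxterSystem.cocycle_descendent h1 h2]
  rw [hconj, hBΦ, hBΦ, hBΦ, RotaBaxterSystem.snd_descendent h2, mul_inv_rev]
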